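/- arXiv:0807.1471 — 5 statements merged into one kernel-verified Lean document; each statement's English description precedes it below -/
import Mathlib

section
/- Let F : C → C' be a lax symmetric monoidal functor, A a dualizable object of C with dual DA such that φ : F(A) ⊗ F(DA) → F(A ⊗ DA) and I' → F(I) are isomorphisms. Then for any endomorphism f : A → A, the trace of F(f) : F(A) → F(A) equals the image under F of the trace of f, i.e. trace(F f) = F(trace(f)) as endomorphisms of the unit object I' (using the isomorphism I' ≅ F(I)). -/
open CategoryTheory MonoidalCategory Functor.LaxMonoidal

/-- The trace of `f : A ⟶ A` with respect to a dual pair `(A, B)` with coevaluation `η`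
and evaluation `ε`: the composite `I ⟶ A ⊗ B ⟶ A ⊗ B ⟶ B ⊗ A ⟶ I`. -/
def monTrace {C : Type*} [Category C] [MonoidalCategory C] [SymmetricCategory C]
    {A B : C} (η : 𝟙_ C ⟶ A ⊗ B) (e : B ⊗ A ⟶ 𝟙_ C) (f : A ⟶ A) : 𝟙_ C ⟶ 𝟙_ C :=
  η ≫ (f ▷ B) ≫ (β_ A B).hom ≫ e

section

variable {C : Type*} [Category C] [MonoidalCategory C]
  {C' : Type*} [Category C'] [MonoidalCategory C'] (F : C ⥤ C') [F.LaxMonoidal]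

lemma inv_μ_comp_map_whiskerRight {X X' : C} (Y : C) [IsIso (μ F X Y)] [IsIso (μ F X' Y)]
    (f : X ⟶ X') :
    inv (μ F X Y) ≫ F.map f ▷ F.obj Y = F.map (f ▷ Y) ≫ inv (μ F X' Y) := by
  rw [IsIso.inv_comp_eq, ← μ_natural_left_assoc, IsIso.hom_inv_id, Category.comp_id]

lemma inv_μ_comp_braiding_comp_μ [BraidedCategory C] [BraidedCategory C'] (X Y : C)
    [IsIso (μ F X Y)]
    (hsym : μ F X Y ≫ F.map (β_ X Y).hom = (β_ (F.obj X) (F.obj Y)).hom ≫ μ F Y X) :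
    inv (μ F X Y) ≫ (β_ (F.obj X) (F.obj Y)).hom ≫ μ F Y X = F.map (β_ X Y).hom := by
  rw [IsIso.inv_comp_eq, hsym]

end

theorem stmt4_general {C : Type*} [Category C] [MonoidalCategory C] [SymmetricCategory C]
    {C' : Type*} [Category C'] [MonoidalCategory C'] [SymmetricCategory C']
    (F : C ⥤ C') [F.LaxMonoidal]
    (hsym : ∀ X Y : C,
      μ F X Y ≫ F.map (β_ X Y).hom = (β_ (F.obj X) (F.obj Y)).hom ≫ μ F Y X)
    (A DA : C) (η : 𝟙_ C ⟶ A ⊗ DA) (e : DA ⊗ A ⟶ 𝟙_ C)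
    [IsIso (μ F A DA)] [IsIso (ε F)] (f : A ⟶ A) :
    monTrace (ε F ≫ F.map η ≫ inv (μ F A DA)) (μ F DA A ≫ F.map e ≫ inv (ε F))
        (F.map f) =
      ε F ≫ F.map (monTrace η e f) ≫ inv (ε F) := by
  simp only [monTrace, Category.assoc, F.map_comp,
    reassoc_of% inv_μ_comp_map_whiskerRight F DA f,
    reassoc_of% inv_μ_comp_braiding_comp_μ F A DA (hsym A DA)]

/-- For a lax symmetric monoidal functor `F : C ⥤ C'`, a dualizable object `A`
with dual `DA` such that `μ : F A ⊗ F DA ⟶ F (A ⊗ DA)` and `ε_F : I' ⟶ F I` are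
isomorphisms, and any endomorphism `f : A ⟶ A`, the trace of `F.map f` (computed with the
induced dual pair `(F A, F DA)`) equals `F (trace f)` as an endomorphism of `I'`, i.e.
`trace (F f) = ε_F ≫ F.map (trace f) ≫ ε_F⁻¹`. -/
theorem stmt4 {C : Type*} [Category C] [MonoidalCategory C] [SymmetricCategory C]
    {C' : Type*} [Category C'] [MonoidalCategory C'] [SymmetricCategory C']
    (F : C ⥤ C') [F.LaxMonoidal]
    (hsym : ∀ X Y : C,
      μ F X Y ≫ F.map (β_ X Y).hom = (β_ (F.obj X) (F.obj Y)).hom ≫ μ F Y X)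
    (A DA : C) (η : 𝟙_ C ⟶ A ⊗ DA) (e : DA ⊗ A ⟶ 𝟙_ C)
    (triangle₁ : (λ_ A).inv ≫ (η ▷ A) ≫ (α_ A DA A).hom ≫ (A ◁ e) ≫ (ρ_ A).hom = 𝟙 A)
    (triangle₂ : (ρ_ DA).inv ≫ (DA ◁ η) ≫ (α_ DA A DA).inv ≫ (e ▷ DA) ≫ (λ_ DA).hom
      = 𝟙 DA)
    [IsIso (μ F A DA)] [IsIso (ε F)] (f : A ⟶ A) :
    monTrace (ε F ≫ F.map η ≫ inv (μ F A DA)) (μ F DA A ≫ F.map e ≫ inv (ε F))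
        (F.map f) =
      ε F ≫ F.map (monTrace η e f) ≫ inv (ε F) :=
  stmt4_general F hsym A DA η e f
end

section
/- The trace function T(A) = Σ_i [a_ii] ∈ R/[R,R] on square matrices over a ring R is universal: for any abelian group G and any function S from square matrices over R to G satisfying S(A+B) = S(A) + S(B) (same-size square matrices) and S(AB) = S(BA) (whenever AB and BA are both square), there is a unique group homomorphism h : R/[R,R] → G such that S = h ∘ T. -/
/-- The additive subgroup of a ring generated by the commutators `r₁r₂ − r₂r₁`. -/
def commutatorSubgroup (R : Type*) [Ring R] : AddSubgroup R :=
  AddSubgroup.closure {x | ∃ a b : R, x = a * b - b * a}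

/-- `⟨R⟩ = R/[R,R]`, the quotient of the additive group of `R` by the commutator
subgroup. -/
abbrev ringShadow (R : Type*) [Ring R] := R ⧸ commutatorSubgroup R

/-- The universal trace function `T(A) = Σᵢ [aᵢᵢ] ∈ ⟨R⟩` on square matrices. -/
def matrixShadowTrace {R : Type*} [Ring R] {n : ℕ} (A : Matrix (Fin n) (Fin n) R) :
    ringShadow R :=
  ∑ i, QuotientAddGroup.mk' (commutatorSubgroup R) (A i i)

/-!
A trace function `S` is determined by its values on `1 × 1` matrices: the matrix unit
`Eᵢⱼ(a)` factors as a column times a row through `Fin 1`, so trace invariance gives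
`S(Eᵢⱼ(a)) = S([a])` for `i = j` and `S(0) = 0` otherwise, and additivity yields
`S(A) = Σᵢ S([aᵢᵢ])`. Trace invariance on `1 × 1` matrices says `r ↦ S([r])` kills
commutators, so it factors through `R/[R,R]`; uniqueness is forced by `T([r]) = [r]`.
-/

theorem AddMonoidHom.commutatorSubgroup_le_ker {R G : Type*} [Ring R] [AddGroup G]
    (f : R →+ G) (hf : ∀ a b : R, f (a * b) = f (b * a)) : commutatorSubgroup R ≤ f.ker :=
  AddSubgroup.closure_le _ |>.mpr <| by
    rintro _ ⟨a, b, rfl⟩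
    simp [hf a b]

theorem matrixShadowTrace_scalar_fin_one {R : Type*} [Ring R] (r : R) :
    matrixShadowTrace (Matrix.scalar (Fin 1) r) =
      QuotientAddGroup.mk' (commutatorSubgroup R) r := by
  simp [matrixShadowTrace]

theorem Matrix.single_fin_one {R : Type*} [Semiring R] (i j : Fin 1) (r : R) :
    Matrix.single i j r = Matrix.scalar (Fin 1) r := by
  ext k l
  simp [Matrix.single, Fin.fin_one_eq_zero]

section TraceFunction

variable {R G : Type*} [Ring R] [AddCommGroup G] (S : ∀ n : ℕ, Matrix (Fin n) (Fin n) R → G)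
  (hadd : ∀ (n : ℕ) (A B : Matrix (Fin n) (Fin n) R), S n (A + B) = S n A + S n B)

def scalarTrace : R →+ G :=
  (AddMonoidHom.mk' (S 1) (hadd 1)).comp (Matrix.scalar (Fin 1)).toAddMonoidHom

theorem scalarTrace_apply (r : R) : scalarTrace S hadd r = S 1 (Matrix.scalar (Fin 1) r) := rfl

variable (hcomm : ∀ (p q : ℕ) (A : Matrix (Fin p) (Fin q) R) (B : Matrix (Fin q) (Fin p) R),
  S p (A * B) = S q (B * A))
include hcomm

theorem scalarTrace_mul_comm (a b : R) :
    scalarTrace S hadd (a * b) = scalarTrace S hadd (b * a) := by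
  simp only [scalarTrace_apply, map_mul, hcomm]

theorem trace_single {n : ℕ} (i j : Fin n) (a : R) :
    S n (Matrix.single i j a) = if j = i then scalarTrace S hadd a else 0 := by
  have hfactor : Matrix.single i j a =
      Matrix.single i (0 : Fin 1) a * Matrix.single (0 : Fin 1) j (1 : R) := by
    simp
  rw [hfactor, hcomm]
  split_ifs with hji
  · simp [hji, Matrix.single_fin_one, scalarTrace_apply]
  · rw [Matrix.single_mul_single_of_ne (h := hji)]
    exact (AddMonoidHom.mk' (S 1) (hadd 1)).map_zero

theorem trace_eq_sum_scalarTrace_diag {n : ℕ} (A : Matrix (Fin n) (Fin n) R) :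
    S n A = ∑ i, scalarTrace S hadd (A i i) := by
  let Sₙ : Matrix (Fin n) (Fin n) R →+ G := AddMonoidHom.mk' (S n) (hadd n)
  calc S n A = Sₙ (∑ i, ∑ j, Matrix.single i j (A i j)) := by
        rw [← Matrix.matrix_eq_sum_single]; rfl
    _ = ∑ i, ∑ j, if j = i then scalarTrace S hadd (A i j) else 0 := by
      simp only [map_sum, Sₙ, AddMonoidHom.mk'_apply, trace_single S hadd hcomm]
    _ = ∑ i, scalarTrace S hadd (A i i) := by simp

end TraceFunction

/-- The trace function `T(A) = Σᵢ [aᵢᵢ] ∈ R/[R,R]` is the universal trace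
function: for any abelian group `G` and any function `S` on square matrices over `R`
(of every size) satisfying `S(A + B) = S(A) + S(B)` and `S(AB) = S(BA)`, there is a
unique group homomorphism `h : R/[R,R] → G` with `S = h ∘ T`. -/
theorem stmt7 {R : Type*} [Ring R] {G : Type*} [AddCommGroup G]
    (S : ∀ n : ℕ, Matrix (Fin n) (Fin n) R → G)
    (hadd : ∀ (n : ℕ) (A B : Matrix (Fin n) (Fin n) R), S n (A + B) = S n A + S n B)
    (hcomm : ∀ (p q : ℕ) (A : Matrix (Fin p) (Fin q) R) (B : Matrix (Fin q) (Fin p) R),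
      S p (A * B) = S q (B * A)) :
    ∃! h : ringShadow R →+ G, ∀ (n : ℕ) (A : Matrix (Fin n) (Fin n) R),
      S n A = h (matrixShadowTrace A) := by
  have hker :=
    (scalarTrace S hadd).commutatorSubgroup_le_ker (scalarTrace_mul_comm S hadd hcomm)
  refine ⟨QuotientAddGroup.lift _ (scalarTrace S hadd) hker, fun n A => ?_, fun h hh => ?_⟩
  · rw [trace_eq_sum_scalarTrace_diag S hadd hcomm, matrixShadowTrace, map_sum]
    rfl
  · refine QuotientAddGroup.addMonoidHom_ext _ (AddMonoidHom.ext fun r => ?_)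
    change h _ = scalarTrace S hadd r
    rw [scalarTrace_apply, hh, matrixShadowTrace_scalar_fin_one]
end

section
/- In a bicategory, let (X, Y) be a dual pair with evaluation ε : Y ⊙ X → U_B an isomorphism, let Z be another 1-cell, and suppose (X ⊙ Z, V) is a dual pair. Then (Z, V ⊙ X) is a dual pair. -/
/-!
Since `ε : x ≫ y ⟶ 𝟙 b` is invertible, `z ≅ z ≫ x ≫ y`, so the duality between `v` and `z ≫ x`
can be pushed along `x`: the new coevaluation is
`𝟙 b ≅ x ≫ y ⟶ x ≫ (v ≫ z ≫ x) ≫ y ⟶ x ≫ v ≫ z` (using `η'` and then `ε`), and the new evaluation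
is `ε'` itself. The right triangle identity reduces to that of `(v, z ≫ x)` and `ε⁻¹ ≫ ε = 𝟙`.
For the left one, the key point is that `ε⁻¹ ▷ x` equals `x ◁ η` up to coherence; after an
interchange, the triangle identities of both dual pairs finish the computation.
-/

open CategoryTheory CategoryTheory.Bicategory

universe w v u

namespace CategoryTheory.Bicategory.Adjunction

variable {B : Type u} [Bicategory.{w, v} B] {a b c : B} {x : b ⟶ a} {y : a ⟶ b}

theorem inv_counit_whiskerRight (adj : y ⊣ x) [IsIso adj.counit] :
    inv adj.counit ▷ x = 𝟙 (𝟙 b ≫ x) ⊗≫ x ◁ adj.unit ⊗≫ 𝟙 ((x ≫ y) ≫ x) := by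
  rw [← cancel_mono (adj.counit ▷ x)]
  calc inv adj.counit ▷ x ≫ adj.counit ▷ x = 𝟙 _ := by
        rw [← comp_whiskerRight, IsIso.inv_hom_id, id_whiskerRight]
    _ = 𝟙 _ ⊗≫ rightZigzag adj.unit adj.counit ⊗≫ 𝟙 _ := by
        rw [adj.right_triangle]; bicategory
    _ = (𝟙 (𝟙 b ≫ x) ⊗≫ x ◁ adj.unit ⊗≫ 𝟙 ((x ≫ y) ≫ x)) ≫ adj.counit ▷ x := by
        dsimp only [rightZigzag]; bicategory

variable (adj : y ⊣ x) [IsIso adj.counit] {z : c ⟶ b} {v : a ⟶ c} (adj' : v ⊣ z ≫ x)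

noncomputable def ofCompRightUnit : 𝟙 b ⟶ (x ≫ v) ≫ z :=
  inv adj.counit ⊗≫ x ◁ adj'.unit ▷ y ⊗≫ x ◁ v ◁ z ◁ adj.counit ⊗≫ 𝟙 ((x ≫ v) ≫ z)

def ofCompRightCounit : z ≫ x ≫ v ⟶ 𝟙 c :=
  (α_ z x v).inv ≫ adj'.counit

theorem ofCompRight_left_triangle :
    leftZigzag (ofCompRightUnit adj adj') (ofCompRightCounit adj') =
      (λ_ (x ≫ v)).hom ≫ (ρ_ (x ≫ v)).inv := by
  calc leftZigzag (ofCompRightUnit adj adj') (ofCompRightCounit adj')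
      _ = 𝟙 _ ⊗≫ (inv adj.counit ▷ x) ▷ v ⊗≫
            x ◁ (adj'.unit ▷ (y ≫ x ≫ v) ⊗≫ (v ≫ z) ◁ (adj.counit ▷ (x ≫ v)) ⊗≫
              v ◁ ofCompRightCounit adj') ⊗≫ 𝟙 _ := by
          dsimp only [leftZigzag, ofCompRightUnit, ofCompRightCounit]; bicategory
      _ = 𝟙 _ ⊗≫ x ◁ ((𝟙 a ◁ (adj.unit ▷ v) ≫ adj'.unit ▷ ((y ≫ x) ≫ v)) ⊗≫
            (v ≫ z) ◁ (adj.counit ▷ (x ≫ v)) ⊗≫ v ◁ ofCompRightCounit adj') ⊗≫ 𝟙 _ := by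
          rw [inv_counit_whiskerRight]; bicategory
      _ = 𝟙 _ ⊗≫ x ◁ ((adj'.unit ▷ (𝟙 a ≫ v) ≫ (v ≫ z ≫ x) ◁ (adj.unit ▷ v)) ⊗≫
            (v ≫ z) ◁ (adj.counit ▷ (x ≫ v)) ⊗≫ v ◁ ofCompRightCounit adj') ⊗≫ 𝟙 _ := by
          rw [whisker_exchange]
      _ = 𝟙 _ ⊗≫ x ◁ (adj'.unit ▷ (𝟙 a ≫ v) ⊗≫
            (v ≫ z) ◁ (rightZigzag adj.unit adj.counit ▷ v) ⊗≫
              v ◁ ofCompRightCounit adj') ⊗≫ 𝟙 _ := by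
          dsimp only [rightZigzag]; bicategory
      _ = 𝟙 _ ⊗≫ x ◁ leftZigzag adj'.unit adj'.counit ⊗≫ 𝟙 _ := by
          rw [adj.right_triangle]; dsimp only [leftZigzag, ofCompRightCounit]; bicategory
      _ = (λ_ (x ≫ v)).hom ≫ (ρ_ (x ≫ v)).inv := by
          rw [adj'.left_triangle]; bicategory

theorem ofCompRight_right_triangle :
    rightZigzag (ofCompRightUnit adj adj') (ofCompRightCounit adj') =
      (ρ_ z).hom ≫ (λ_ z).inv := by
  calc rightZigzag (ofCompRightUnit adj adj') (ofCompRightCounit adj')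
      _ = 𝟙 _ ⊗≫ z ◁ inv adj.counit ⊗≫ (z ≫ x) ◁ adj'.unit ▷ y ⊗≫
            ((z ≫ x ≫ v) ◁ (z ◁ adj.counit) ≫ ofCompRightCounit adj' ▷ (z ≫ 𝟙 b)) ⊗≫
              𝟙 _ := by
          dsimp only [rightZigzag, ofCompRightUnit]; bicategory
      _ = 𝟙 _ ⊗≫ z ◁ inv adj.counit ⊗≫ (z ≫ x) ◁ adj'.unit ▷ y ⊗≫
            (ofCompRightCounit adj' ▷ (z ≫ x ≫ y) ≫ 𝟙 c ◁ (z ◁ adj.counit)) ⊗≫ 𝟙 _ := by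
          rw [whisker_exchange]
      _ = 𝟙 _ ⊗≫ z ◁ inv adj.counit ⊗≫
            rightZigzag adj'.unit adj'.counit ▷ y ⊗≫ z ◁ adj.counit ⊗≫ 𝟙 _ := by
          dsimp only [rightZigzag, ofCompRightCounit]; bicategory
      _ = 𝟙 _ ⊗≫ z ◁ (inv adj.counit ≫ adj.counit) ⊗≫ 𝟙 _ := by
          rw [adj'.right_triangle]; bicategory
      _ = (ρ_ z).hom ≫ (λ_ z).inv := by
          rw [IsIso.inv_hom_id]; bicategory

noncomputable def ofCompRight : x ≫ v ⊣ z where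
  unit := ofCompRightUnit adj adj'
  counit := ofCompRightCounit adj'
  left_triangle := ofCompRight_left_triangle adj adj'
  right_triangle := ofCompRight_right_triangle adj adj'

end CategoryTheory.Bicategory.Adjunction

/-- Let `(X, Y)` be a dual pair whose evaluation `ε : Y ⊙ X → U_B` is an
isomorphism, let `Z ∈ B(C,B)` be a 1-cell, and suppose `(X ⊙ Z, V)` is a dual pair.
Then `(Z, V ⊙ X)` is a dual pair. -/
theorem stmt13 {B : Type u} [Bicategory.{w, v} B] {a b c : B}
    {x : b ⟶ a} {y : a ⟶ b} (adj : Bicategory.Adjunction y x)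
    (hε : IsIso adj.counit)
    {z : c ⟶ b} {v : a ⟶ c} (adj' : Bicategory.Adjunction v (z ≫ x)) :
    Nonempty (Bicategory.Adjunction (x ≫ v) z) :=
  ⟨adj.ofCompRight adj'⟩
end

section
/- In a bicategory with shadows, the trace is independent of the choice of dual: if (X, Y) and (X, Y') are both dual pairs for a 1-cell X ∈ B(B,A), and f : Q ⊙ X → X ⊙ P is a 2-cell (with Q ∈ B(A,A), P ∈ B(B,B)), then the trace of f computed with respect to (X,Y) equals the trace computed with respect to (X,Y'), as morphisms ⟨Q⟩ → ⟨P⟩. -/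
/-!
Two right duals `Y`, `Y'` of `X` are compared by the conjugate `φ : Y ⟶ Y'` of the identity
of `X`, which carries the unit of `(X, Y)` to that of `(X, Y')` and the counit of `(X, Y')`
back to that of `(X, Y)`. Inserting `φ` between the two halves of the trace, it slides into the
coevaluation on one side and, by naturality of `θ`, into the evaluation on the other.
-/

open CategoryTheory CategoryTheory.Bicategory

universe w v u

/-- A *shadow* on a bicategory `B`: a chosen 0-cell `pt`, functors
`⟨-⟩ : B(a,a) ⥤ B(pt,pt)` for every 0-cell `a`, and natural isomorphisms
`θ : ⟨f ⊙ g⟩ ≅ ⟨g ⊙ f⟩` compatible with the unit and associativity isomorphisms.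
(Here `X ⊙ Y` for `X ∈ B(B,A)`, `Y ∈ B(A,B)` corresponds to `y ≫ x` for 1-cells
`x : b ⟶ a`, `y : a ⟶ b` in Mathlib's conventions.) -/
structure Shadow (B : Type u) [Bicategory.{w, v} B] where
  /-- the chosen 0-cell `I` -/
  pt : B
  /-- the shadow functors on the endo-hom-categories -/
  sh : ∀ a : B, (a ⟶ a) ⥤ (pt ⟶ pt)
  /-- the cyclicity isomorphisms -/
  θ : ∀ {a b : B} (f : a ⟶ b) (g : b ⟶ a), (sh a).obj (f ≫ g) ≅ (sh b).obj (g ≫ f)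
  θ_natural_left : ∀ {a b : B} {f f' : a ⟶ b} (η : f ⟶ f') (g : b ⟶ a),
    (sh a).map (η ▷ g) ≫ (θ f' g).hom = (θ f g).hom ≫ (sh b).map (g ◁ η)
  θ_natural_right : ∀ {a b : B} (f : a ⟶ b) {g g' : b ⟶ a} (η : g ⟶ g'),
    (sh a).map (f ◁ η) ≫ (θ f g').hom = (θ f g).hom ≫ (sh b).map (η ▷ f)
  /-- compatibility of `θ` with the associativity isomorphisms -/
  θ_hexagon : ∀ {a b c : B} (f : a ⟶ b) (g : b ⟶ c) (h : c ⟶ a),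
    (θ (f ≫ g) h).hom ≫ (sh c).map (α_ h f g).inv =
      (sh a).map (α_ f g h).hom ≫ (θ f (g ≫ h)).hom ≫ (sh b).map (α_ g h f).hom ≫
        (θ g (h ≫ f)).hom
  /-- compatibility of `θ` with the unit isomorphisms -/
  θ_unit : ∀ {a : B} (z : a ⟶ a),
    (θ (𝟙 a) z).hom ≫ (sh a).map (ρ_ z).hom = (sh a).map (λ_ z).hom

variable {B : Type u} [Bicategory.{w, v} B]

/-- The trace of a 2-cell `f : Q ⊙ X → X ⊙ P` (in Mathlib's conventions,
`f : x ≫ q ⟶ p ≫ x` for `x : b ⟶ a` with right dual `y : a ⟶ b`, `q : a ⟶ a`,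
`p : b ⟶ b`) with respect to a shadow `S` and the dual pair given by the adjunction
`adj : y ⊣ x`:
`⟨Q⟩ ≅ ⟨Q ⊙ U_A⟩ → ⟨Q ⊙ X ⊙ Y⟩ → ⟨X ⊙ P ⊙ Y⟩ ≅ ⟨Y ⊙ X ⊙ P⟩ → ⟨U_B ⊙ P⟩ ≅ ⟨P⟩`. -/
def Shadow.trace (S : Shadow B) {a b : B} {x : b ⟶ a} {y : a ⟶ b}
    (adj : Bicategory.Adjunction y x) {q : a ⟶ a} {p : b ⟶ b}
    (f : x ≫ q ⟶ p ≫ x) : ((S.sh a).obj q ⟶ (S.sh b).obj p) :=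
  (S.sh a).map ((λ_ q).inv ≫ (adj.unit ▷ q) ≫ (α_ y x q).hom ≫ (y ◁ f)) ≫
    (S.θ y (p ≫ x)).hom ≫
    (S.sh b).map ((α_ p x y).hom ≫ (p ◁ adj.counit) ≫ (ρ_ p).hom)

namespace CategoryTheory.Bicategory

variable {c d : B} {l₁ l₂ : c ⟶ d} {r₁ r₂ : d ⟶ c} (adj₁ : l₁ ⊣ r₁) (adj₂ : l₂ ⊣ r₂)

theorem unit_comp_conjugateEquiv_symm_whiskerRight (β : r₁ ⟶ r₂) :
    adj₂.unit ≫ (conjugateEquiv adj₁ adj₂).symm β ▷ r₂ = adj₁.unit ≫ l₁ ◁ β := by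
  rw [conjugateEquiv_symm_apply']
  calc
    _ = 𝟙 _ ⊗≫ (𝟙 c ◁ adj₂.unit ≫ adj₁.unit ▷ (l₂ ≫ r₂)) ⊗≫ l₁ ◁ β ▷ l₂ ▷ r₂ ⊗≫
          l₁ ◁ adj₂.counit ▷ r₂ ⊗≫ 𝟙 _ := by
      bicategory
    _ = 𝟙 _ ⊗≫ adj₁.unit ⊗≫ l₁ ◁ (r₁ ◁ adj₂.unit ≫ β ▷ (l₂ ≫ r₂)) ⊗≫
          l₁ ◁ adj₂.counit ▷ r₂ ⊗≫ 𝟙 _ := by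
      rw [whisker_exchange]; bicategory
    _ = 𝟙 _ ⊗≫ adj₁.unit ⊗≫ l₁ ◁ β ⊗≫ l₁ ◁ rightZigzag adj₂.unit adj₂.counit ⊗≫ 𝟙 _ := by
      rw [whisker_exchange]; dsimp only [rightZigzag]; bicategory
    _ = _ := by rw [adj₂.right_triangle]; bicategory

theorem whiskerLeft_conjugateEquiv_symm_comp_counit (β : r₁ ⟶ r₂) :
    r₁ ◁ (conjugateEquiv adj₁ adj₂).symm β ≫ adj₁.counit = β ▷ l₂ ≫ adj₂.counit := by
  rw [conjugateEquiv_symm_apply']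
  calc
    _ = 𝟙 _ ⊗≫ r₁ ◁ adj₁.unit ▷ l₂ ⊗≫ r₁ ◁ l₁ ◁ β ▷ l₂ ⊗≫
          ((r₁ ≫ l₁) ◁ adj₂.counit ≫ adj₁.counit ▷ 𝟙 d) ⊗≫ 𝟙 _ := by
      bicategory
    _ = 𝟙 _ ⊗≫ r₁ ◁ adj₁.unit ▷ l₂ ⊗≫ ((r₁ ≫ l₁) ◁ β ≫ adj₁.counit ▷ r₂) ▷ l₂ ⊗≫
          adj₂.counit := by
      rw [whisker_exchange]; bicategory
    _ = 𝟙 _ ⊗≫ rightZigzag adj₁.unit adj₁.counit ▷ l₂ ⊗≫ β ▷ l₂ ⊗≫ adj₂.counit := by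
      rw [whisker_exchange]; dsimp only [rightZigzag]; bicategory
    _ = _ := by rw [adj₁.right_triangle]; bicategory

end CategoryTheory.Bicategory

namespace Shadow

variable (S : Shadow B) {a b : B} {x : b ⟶ a} {y y' : a ⟶ b}

theorem trace_eq_trace_of_unit_counit (adj : y ⊣ x) (adj' : y' ⊣ x) (φ : y ⟶ y')
    (h_unit : adj.unit ≫ φ ▷ x = adj'.unit) (h_counit : x ◁ φ ≫ adj'.counit = adj.counit)
    {q : a ⟶ a} {p : b ⟶ b} (f : x ≫ q ⟶ p ≫ x) : S.trace adj f = S.trace adj' f := by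
  have unit_side : (λ_ q).inv ≫ adj'.unit ▷ q ≫ (α_ y' x q).hom ≫ y' ◁ f =
      ((λ_ q).inv ≫ adj.unit ▷ q ≫ (α_ y x q).hom ≫ y ◁ f) ≫ φ ▷ (p ≫ x) :=
    calc
      _ = 𝟙 q ⊗≫ (adj.unit ≫ φ ▷ x) ▷ q ⊗≫ y' ◁ f := by
        rw [h_unit]; bicategory
      _ = 𝟙 q ⊗≫ adj.unit ▷ q ⊗≫ (φ ▷ (x ≫ q) ≫ y' ◁ f) := by
        bicategory
      _ = 𝟙 q ⊗≫ adj.unit ▷ q ⊗≫ (y ◁ f ≫ φ ▷ (p ≫ x)) := by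
        rw [← whisker_exchange]
      _ = _ := by bicategory
  have counit_side : (p ≫ x) ◁ φ ≫ (α_ p x y').hom ≫ p ◁ adj'.counit ≫ (ρ_ p).hom =
      (α_ p x y).hom ≫ p ◁ adj.counit ≫ (ρ_ p).hom :=
    calc
      _ = 𝟙 _ ⊗≫ p ◁ (x ◁ φ ≫ adj'.counit) ⊗≫ 𝟙 p := by bicategory
      _ = _ := by rw [h_counit]; bicategory
  simp only [trace, unit_side, ← counit_side, Functor.map_comp, Category.assoc,
    reassoc_of% S.θ_natural_left]

end Shadow

/-- In a bicategory with shadows, the trace is independent of the choice of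
dual: if `(X, Y)` and `(X, Y')` are both dual pairs for `X ∈ B(B,A)` and
`f : Q ⊙ X → X ⊙ P` is a 2-cell, then the trace of `f` computed with `(X, Y)` equals the
trace computed with `(X, Y')`, as morphisms `⟨Q⟩ → ⟨P⟩`. -/
theorem stmt16 (S : Shadow B) {a b : B} {x : b ⟶ a} {y y' : a ⟶ b}
    (adj : Bicategory.Adjunction y x) (adj' : Bicategory.Adjunction y' x)
    {q : a ⟶ a} {p : b ⟶ b} (f : x ≫ q ⟶ p ≫ x) :
    S.trace adj f = S.trace adj' f :=
  S.trace_eq_trace_of_unit_counit adj adj' ((conjugateEquiv adj' adj).symm (𝟙 x))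
    (by simpa using unit_comp_conjugateEquiv_symm_whiskerRight adj' adj (𝟙 x))
    (by simpa using whiskerLeft_conjugateEquiv_symm_comp_counit adj' adj (𝟙 x)) f
end

section
/- Multiplicativity of the bicategorical trace: in a bicategory with shadows where the shadow lands in a monoidal hom-category B(I,I), let X and Z be right dualizable 1-cells, f : Q ⊙ X → X a 2-cell and g : Z → Z ⊙ P a 2-cell such that g ⊙ f : Z ⊙ Q ⊙ X → Z ⊙ P ⊙ X is defined. Then tr(g ⊙ f) = tr(g) ∘ tr(f) (composition/product of the corresponding shadow morphisms). -/
open CategoryTheory CategoryTheory.Bicategory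

universe w v u

variable {B : Type u} [Bicategory.{w, v} B]

/-!
For the composite dual pair `(X ⊙ Z, W ⊙ Y)`, the hexagon axiom splits the rotation of
`⟨(Y ⊙ W) ⊙ M⟩` (where `M = P ⊙ Z ⊙ X`) into a rotation past `Y` followed by one past `W`.
Naturality of `θ` then moves the `Z`-coevaluation (carrying `g`) and the `X`-evaluation into
the middle term `⟨W ⊙ M ⊙ Y⟩`, where the interchange law rewrites them as the evaluation of `X`
followed by the coevaluation of `Z`: exactly the point where `tr(f)` ends and `tr(g)` begins.
-/

namespace CategoryTheory.Bicategory.Adjunction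

variable {a b c : B} {x : b ⟶ a} {y : a ⟶ b}

def traceCoev (adj : Adjunction y x) {q : a ⟶ a} {r : b ⟶ a} (f : x ≫ q ⟶ r) :
    q ⟶ y ≫ r :=
  (λ_ q).inv ≫ (adj.unit ▷ q) ≫ (α_ y x q).hom ≫ (y ◁ f)

def traceEv (adj : Adjunction y x) (r : c ⟶ b) : (r ≫ x) ≫ y ⟶ r :=
  (α_ r x y).hom ≫ (r ◁ adj.counit) ≫ (ρ_ r).hom

variable {z : c ⟶ b} {w : b ⟶ c} (adjX : Adjunction y x) (adjZ : Adjunction w z)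

theorem comp_traceCoev_comp {q : a ⟶ a} {p : c ⟶ c} (f : x ≫ q ⟶ x) (g : z ⟶ p ≫ z) :
    (adjX.comp adjZ).traceCoev ((α_ z x q).hom ≫ (z ◁ f) ≫ (g ▷ x) ≫ (α_ p z x).hom) =
      adjX.traceCoev (f ≫ (λ_ x).inv) ≫
        y ◁ (adjZ.traceCoev ((ρ_ z).hom ≫ g) ▷ x ≫ (α_ w (p ≫ z) x).hom ≫
          w ◁ (α_ p z x).hom) ≫ (α_ y w (p ≫ z ≫ x)).inv := by
  simp only [traceCoev, comp_unit, compUnit]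
  calc
    _ = 𝟙 _ ⊗≫ adjX.unit ▷ q ⊗≫ y ◁ (adjZ.unit ▷ (x ≫ q) ≫ (w ≫ z) ◁ f) ⊗≫
          y ◁ w ◁ (g ▷ x) ⊗≫ 𝟙 _ := by
      bicategory
    _ = 𝟙 _ ⊗≫ adjX.unit ▷ q ⊗≫ y ◁ (𝟙 b ◁ f ≫ adjZ.unit ▷ x) ⊗≫
          y ◁ w ◁ (g ▷ x) ⊗≫ 𝟙 _ := by
      rw [whisker_exchange]
    _ = _ := by
      bicategory

theorem comp_traceEv (p : c ⟶ c) :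
    (adjX.comp adjZ).traceEv p =
      ((α_ (p ≫ z ≫ x) y w).inv ≫ ((α_ p z x).inv ▷ y ≫ adjX.traceEv (p ≫ z)) ▷ w) ≫
        adjZ.traceEv p := by
  simp only [traceEv, comp_counit, compCounit]
  bicategory

theorem traceCoev_whiskerRight_comp_traceEv {p : c ⟶ c} (g : z ⟶ p ≫ z) :
    (adjZ.traceCoev ((ρ_ z).hom ≫ g) ▷ x ≫ (α_ w (p ≫ z) x).hom ≫ w ◁ (α_ p z x).hom) ▷ y ≫
        (α_ w (p ≫ z ≫ x) y).hom ≫ w ◁ ((α_ p z x).inv ▷ y ≫ adjX.traceEv (p ≫ z)) =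
      adjX.traceEv (𝟙 b) ≫ adjZ.traceCoev ((ρ_ z).hom ≫ g) := by
  simp only [traceCoev, traceEv]
  calc
    _ = 𝟙 _ ⊗≫ adjZ.unit ▷ (x ≫ y) ⊗≫
          w ◁ (g ▷ (x ≫ y) ≫ (p ≫ z) ◁ adjX.counit) ⊗≫ 𝟙 _ := by
      bicategory
    _ = 𝟙 _ ⊗≫ (adjZ.unit ▷ (x ≫ y) ≫ (w ≫ z) ◁ adjX.counit) ⊗≫
          w ◁ g ▷ 𝟙 b ⊗≫ 𝟙 _ := by
      rw [← whisker_exchange]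
      bicategory
    _ = 𝟙 _ ⊗≫ (𝟙 b ◁ adjX.counit ≫ adjZ.unit ▷ 𝟙 b) ⊗≫ w ◁ g ▷ 𝟙 b ⊗≫ 𝟙 _ := by
      rw [← whisker_exchange]
    _ = _ := by
      bicategory

end CategoryTheory.Bicategory.Adjunction

namespace Shadow

variable (S : Shadow B) {a b c : B}

theorem trace_eq {x : b ⟶ a} {y : a ⟶ b} (adj : Adjunction y x) {q : a ⟶ a} {p : b ⟶ b}
    (f : x ≫ q ⟶ p ≫ x) :
    S.trace adj f =
      (S.sh a).map (adj.traceCoev f) ≫ (S.θ y (p ≫ x)).hom ≫ (S.sh b).map (adj.traceEv p) :=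
  rfl

theorem θ_comp_hom (f : a ⟶ b) (g : b ⟶ c) (h : c ⟶ a) :
    (S.θ (f ≫ g) h).hom =
      (S.sh a).map (α_ f g h).hom ≫ (S.θ f (g ≫ h)).hom ≫ (S.sh b).map (α_ g h f).hom ≫
        (S.θ g (h ≫ f)).hom ≫ (S.sh c).map (α_ h f g).hom := by
  rw [← reassoc_of% S.θ_hexagon, Iso.map_inv_hom_id, Category.comp_id]

theorem θ_comp_conj (y : a ⟶ b) (w : b ⟶ c) {m : c ⟶ a} {m' : b ⟶ a} {m'' : c ⟶ b}
    (η : m' ⟶ w ≫ m) (ζ : m ≫ y ⟶ m'') :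
    (S.sh a).map (y ◁ η ≫ (α_ y w m).inv) ≫ (S.θ (y ≫ w) m).hom ≫
        (S.sh c).map ((α_ m y w).inv ≫ ζ ▷ w) =
      (S.θ y m').hom ≫ (S.sh b).map (η ▷ y ≫ (α_ w m y).hom ≫ w ◁ ζ) ≫ (S.θ w m'').hom := by
  simp only [θ_comp_hom, Functor.map_comp, Category.assoc, Iso.map_inv_hom_id_assoc,
    Iso.map_hom_inv_id_assoc]
  rw [reassoc_of% S.θ_natural_right, ← S.θ_natural_right]

end Shadow

/-- Multiplicativity of the bicategorical trace.  Let `X ∈ B(B,A)` (with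
dual `Y`) and `Z ∈ B(C,B)` (with dual `W`) be right dualizable, `f : Q ⊙ X → X` and
`g : Z → Z ⊙ P` 2-cells.  The composite 2-cell
`g ⊙ f : Q ⊙ (X ⊙ Z) → (X ⊙ Z) ⊙ P`, traced using the composite dual pair
`(X ⊙ Z, W ⊙ Y)` (Theorem `Adjunction.comp`), has trace the composite
`tr(g) ∘ tr(f) : ⟨Q⟩ → ⟨U_B⟩ → ⟨P⟩` of the shadow morphisms `tr(f)` and `tr(g)`. -/
theorem stmt18 (S : Shadow B) {a b c : B}
    {x : b ⟶ a} {y : a ⟶ b} (adjX : Bicategory.Adjunction y x)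
    {z : c ⟶ b} {w : b ⟶ c} (adjZ : Bicategory.Adjunction w z)
    {q : a ⟶ a} {p : c ⟶ c}
    (f : x ≫ q ⟶ x) (g : z ⟶ p ≫ z) :
    S.trace (adjX.comp adjZ)
        ((α_ z x q).hom ≫ (z ◁ f) ≫ (g ▷ x) ≫ (α_ p z x).hom) =
      S.trace adjX (f ≫ (λ_ x).inv) ≫ S.trace adjZ ((ρ_ z).hom ≫ g) := by
  rw [S.trace_eq, S.trace_eq, S.trace_eq, adjX.comp_traceCoev_comp adjZ f g,
    adjX.comp_traceEv adjZ, (S.sh a).map_comp (adjX.traceCoev _),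
    (S.sh c).map_comp _ (adjZ.traceEv p),
    Category.assoc, reassoc_of% S.θ_comp_conj, adjX.traceCoev_whiskerRight_comp_traceEv adjZ g]
  simp only [Functor.map_comp, Category.assoc]
end
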